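/- Let W = M(c,h) be a Virasoro Verma module in a Feigin–Fuchs block of type (a), (b) or (c), W_2 = M(c,h_1) the submodule generated by a singular vector s_{h_1} of level N, W_1 the complementary subspace and π_{W_2}: W → W_2 the projection along W_1. For w_1 ∈ W_1, let Y_W(ω,x)w_1 = Σ_{m∈ℤ} L(m)w_1 x^{-m-2}. Then π_{W_2} Y_W(ω,x)w_1 is a finite Laurent polynomial in W_2[x,x^{-1}]; moreover π_{W_2} Y_W(ω,x)w_1 ≠ 0 only when Ind(w_1) = N−1. -/

import Mathlib

/-!
The projection `π_{W₂}` kills `W₁`, the span of the standard monomials with fewer than `N`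
factors `L(-1)`, so everything hinges on when `L(m) w₁` leaves `W₁`. Bringing
`L(m) L(-p₁)⋯L(-p_t)L(-1)^q 𝟙` into standard form raises the exponent of `L(-1)` by at most
one, and not at all when `m ≤ -2`, because commutators of modes `≤ -2` are again modes `≤ -2`.
Since `L(m)` also lowers the level by `m`, it kills `w₁` for `m ≫ 0`. Hence `π_{W₂} L(m) w₁`
vanishes for `m ≤ -2` and for `m ≫ 0`, and for every `m` unless `Ind(w₁) = N - 1`.
-/

open scoped BigOperators

noncomputable section

/-- A representation of the Virasoro algebra on a `ℂ`-vector space `M`, with the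
central element `k` acting by the scalar `cc`. -/
structure VirRep (M : Type) [AddCommGroup M] [Module ℂ M] : Type where
  L : ℤ → M → M
  cc : ℂ
  L_linear : ∀ n : ℤ, IsLinearMap ℂ (L n)
  comm : ∀ (m n : ℤ) (x : M),
    L m (L n x) - L n (L m x) =
      ((m - n : ℤ) : ℂ) • L (m + n) x +
        (if m + n = 0 then ((m ^ 3 - m : ℤ) : ℂ) / 12 * cc else 0) • x

/-- Index of the standard PBW monomials `L(-p₁)⋯L(-p_t)L(-1)^q 𝟙` of a Verma module:
a weakly decreasing list of integers `≥ 2` together with the exponent `q` of `L(-1)`. -/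
def VirIdx : Type := {l : List ℕ // l.Chain' (· ≥ ·) ∧ ∀ a ∈ l, 2 ≤ a} × ℕ

/-- The level of a monomial index. -/
def VirIdx.level (i : VirIdx) : ℕ := i.1.1.sum + i.2

/-- The monomial index of `L(-1)^q 𝟙`. -/
def VirIdx.pure (q : ℕ) : VirIdx := (⟨[], List.isChain_nil, by simp⟩, q)

/-- The monomial `L(-p₁)⋯L(-p_t)L(-1)^q v`. -/
def VirRep.monomial {M : Type} [AddCommGroup M] [Module ℂ M] (R : VirRep M) (v : M)
    (i : VirIdx) : M :=
  i.1.1.foldr (fun a acc => R.L (-(a : ℤ)) acc) ((fun x => R.L (-1) x)^[i.2] v)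

/-- The Verma module `M(c,h)` for the Virasoro algebra: a representation with central
charge `c` and a highest-weight vector `hw` of weight `h` annihilated by the positive
part, such that the standard monomials form a basis. -/
structure VirVerma (M : Type) [AddCommGroup M] [Module ℂ M] (c h : ℂ)
    extends VirRep M : Type where
  cc_eq : cc = c
  hw : M
  hw_L0 : L 0 hw = h • hw
  hw_sing : ∀ n : ℤ, 0 < n → L n hw = 0
  bas : Module.Basis VirIdx ℂ M
  bas_eq : ∀ i : VirIdx, bas i = toVirRep.monomial hw i

/-- The index `Ind(w)` of `w` (Definition 5.3 of the paper): the largest exponent `q`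
of `L(-1)` occurring in the standard expression of `w`, with `Ind 0 = -1`. -/
def VirVerma.Ind {M : Type} [AddCommGroup M] [Module ℂ M] {c h : ℂ}
    (Vm : VirVerma M c h) (w : M) : ℤ :=
  WithBot.unbotD (-1) (((Vm.bas.repr w).support.image (fun i : VirIdx => (i.2 : ℤ))).max)

/-- A singular vector: annihilated by `L(n)` for all `n > 0`. -/
def IsSingular {M : Type} [AddCommGroup M] [Module ℂ M] (R : VirRep M) (w : M) : Prop :=
  ∀ n : ℤ, 0 < n → R.L n w = 0

/-- Stability of a subspace under the Virasoro action. -/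
def VirInvariant {M : Type} [AddCommGroup M] [Module ℂ M] (R : VirRep M)
    (S : Submodule ℂ M) : Prop :=
  ∀ (n : ℤ) (x : M), x ∈ S → R.L n x ∈ S

/-- The Vir-submodule generated by a subset. -/
def VirGen {M : Type} [AddCommGroup M] [Module ℂ M] (R : VirRep M) (s : Set M) :
    Submodule ℂ M :=
  sInf {U : Submodule ℂ M | VirInvariant R U ∧ s ⊆ U}

lemma VirIdx.isChain_and_two_le_of_cons {p : ℕ} {l : List ℕ}
    (h : (p :: l).IsChain (· ≥ ·) ∧ ∀ b ∈ p :: l, 2 ≤ b) : l.IsChain (· ≥ ·) ∧ ∀ b ∈ l, 2 ≤ b :=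
  ⟨h.1.tail, fun b hb => h.2 b (List.mem_cons_of_mem p hb)⟩

namespace VirRep

variable {M : Type} [AddCommGroup M] [Module ℂ M] (R : VirRep M)

lemma L_mem_of_mem_span {m : ℤ} {s : Set M} {T : Submodule ℂ M}
    (hs : ∀ v ∈ s, R.L m v ∈ T) {x : M} (hx : x ∈ Submodule.span ℂ s) : R.L m x ∈ T :=
  (Submodule.map_span_le (IsLinearMap.mk' _ (R.L_linear m)) s T).2 hs
    (Submodule.mem_map_of_mem hx)

lemma L_L_mem {T : Submodule ℂ M} {m n : ℤ} {x : M} (h₁ : R.L n (R.L m x) ∈ T)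
    (h₂ : R.L (m + n) x ∈ T) (h₃ : m + n = 0 → x ∈ T) : R.L m (R.L n x) ∈ T := by
  rw [← sub_add_cancel (R.L m (R.L n x)) (R.L n (R.L m x)), R.comm]
  refine T.add_mem (T.add_mem (T.smul_mem _ h₂) ?_) h₁
  split_ifs with h
  · exact T.smul_mem _ (h₃ h)
  · rw [zero_smul]
    exact T.zero_mem

end VirRep

namespace VirVerma

variable {M : Type} [AddCommGroup M] [Module ℂ M] {c h : ℂ} (Vm : VirVerma M c h)

lemma bas_nil_zero (hl) : Vm.bas ((⟨[], hl⟩, 0) : VirIdx) = Vm.hw :=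
  Vm.bas_eq _

lemma bas_nil_succ (hl) (q : ℕ) :
    Vm.bas ((⟨[], hl⟩, q + 1) : VirIdx) = Vm.L (-1) (Vm.bas ((⟨[], hl⟩, q) : VirIdx)) := by
  rw [Vm.bas_eq ((⟨[], hl⟩, q + 1) : VirIdx), Vm.bas_eq ((⟨[], hl⟩, q) : VirIdx)]
  exact Function.iterate_succ_apply' _ q Vm.hw

lemma bas_cons {a : ℕ} {l : List ℕ} (hl hal) (q : ℕ) :
    Vm.bas ((⟨a :: l, hal⟩, q) : VirIdx) = Vm.L (-a) (Vm.bas ((⟨l, hl⟩, q) : VirIdx)) := by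
  rw [Vm.bas_eq ((⟨a :: l, hal⟩, q) : VirIdx), Vm.bas_eq ((⟨l, hl⟩, q) : VirIdx)]
  rfl

lemma L_mem_of_mem_span_bas {m : ℤ} {S : Set VirIdx} {T : Submodule ℂ M}
    (hS : ∀ j ∈ S, Vm.L m (Vm.bas j) ∈ T) {x : M}
    (hx : x ∈ Submodule.span ℂ (Vm.bas '' S)) : Vm.L m x ∈ T :=
  Vm.toVirRep.L_mem_of_mem_span (by rintro _ ⟨j, hj, rfl⟩; exact hS j hj) hx

def levelSpan (ℓ : ℤ) (Q : ℕ) : Submodule ℂ M :=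
  Submodule.span ℂ (Vm.bas '' {j | (j.level : ℤ) = ℓ ∧ j.2 ≤ Q})

lemma bas_mem_levelSpan {j : VirIdx} {ℓ : ℤ} {Q : ℕ} (hℓ : (j.level : ℤ) = ℓ) (hQ : j.2 ≤ Q) :
    Vm.bas j ∈ Vm.levelSpan ℓ Q :=
  Submodule.subset_span ⟨j, ⟨hℓ, hQ⟩, rfl⟩

lemma levelSpan_le {ℓ ℓ' : ℤ} {Q Q' : ℕ} (hℓ : ℓ = ℓ') (hQ : Q ≤ Q') :
    Vm.levelSpan ℓ Q ≤ Vm.levelSpan ℓ' Q' :=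
  Submodule.span_mono (Set.image_mono fun _ hj => ⟨hj.1.trans hℓ, hj.2.trans hQ⟩)

lemma levelSpan_eq_bot {ℓ : ℤ} (hℓ : ℓ < 0) (Q : ℕ) : Vm.levelSpan ℓ Q = ⊥ := by
  rw [levelSpan, Submodule.span_eq_bot]
  rintro _ ⟨j, ⟨hj, -⟩, rfl⟩
  omega

lemma L_neg_bas_mem_of_head_le {a : ℕ} (ha : 2 ≤ a) {l : List ℕ} (hl)
    (hhead : ∀ p ∈ l.head?, p ≤ a) (q : ℕ) :
    Vm.L (-a) (Vm.bas ((⟨l, hl⟩, q) : VirIdx)) ∈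
      Vm.levelSpan ((VirIdx.level ((⟨l, hl⟩, q) : VirIdx) : ℤ) + a) q := by
  have hal : (a :: l).IsChain (· ≥ ·) ∧ ∀ b ∈ a :: l, 2 ≤ b :=
    ⟨List.isChain_cons.2 ⟨hhead, hl.1⟩, List.forall_mem_cons.2 ⟨ha, hl.2⟩⟩
  rw [← Vm.bas_cons hl hal]
  exact Vm.bas_mem_levelSpan (by simp [VirIdx.level]; ring) le_rfl

/-- `[L(-a), L(-p)]` is a multiple of `L(-a-p)`, so for `a, p ≥ 2` straightening never
produces an `L(-1)`. -/
lemma L_neg_bas_mem (i : VirIdx) {a : ℕ} (ha : 2 ≤ a) :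
    Vm.L (-a) (Vm.bas i) ∈ Vm.levelSpan (i.level + a) i.2 := by
  induction hn : i.level using Nat.strong_induction_on generalizing i a with
  | _ n ih =>
  obtain ⟨⟨l, hl⟩, q⟩ := i
  cases l with
  | nil => exact hn ▸ Vm.L_neg_bas_mem_of_head_le ha hl (by simp) q
  | cons p l =>
    by_cases hpa : p ≤ a
    · exact hn ▸ Vm.L_neg_bas_mem_of_head_le ha hl (by simpa using hpa) q
    have hl' := VirIdx.isChain_and_two_le_of_cons hl
    set i' : VirIdx := (⟨l, hl'⟩, q)
    have hp : 2 ≤ p := hl.2 p List.mem_cons_self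
    have hlev : n = i'.level + p := by
      rw [← hn]; simp [i', VirIdx.level]; ring
    rw [Vm.bas_cons hl' hl]
    refine Vm.toVirRep.L_L_mem ?_ ?_ (fun h => by omega)
    · refine Vm.L_mem_of_mem_span_bas ?_ (ih _ (by omega) i' ha rfl)
      rintro j ⟨hjℓ, hjQ⟩
      exact Vm.levelSpan_le (by omega) hjQ (ih _ (by omega) j hp rfl)
    · have := ih _ (by omega) i' (a := a + p) (by omega) rfl
      push_cast at this
      rwa [show -(a : ℤ) + -p = -(a + p) by ring, show (n : ℤ) + a = i'.level + (a + p) by omega]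

lemma L_neg_mem {a : ℕ} (ha : 2 ≤ a) {ℓ : ℤ} {Q : ℕ} {x : M} (hx : x ∈ Vm.levelSpan ℓ Q) :
    Vm.L (-a) x ∈ Vm.levelSpan (ℓ + a) Q :=
  Vm.L_mem_of_mem_span_bas (fun j hj =>
    Vm.levelSpan_le (by rw [hj.1]) hj.2 (Vm.L_neg_bas_mem j ha)) hx

lemma L_neg_one_bas_mem (i : VirIdx) :
    Vm.L (-1) (Vm.bas i) ∈ Vm.levelSpan (i.level + 1) (i.2 + 1) := by
  obtain ⟨⟨l, hl⟩, q⟩ := i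
  induction l with
  | nil =>
    rw [← Vm.bas_nil_succ hl]
    exact Vm.bas_mem_levelSpan (by simp [VirIdx.level]) le_rfl
  | cons p l ih =>
    have hl' := VirIdx.isChain_and_two_le_of_cons hl
    have hp : 2 ≤ p := hl.2 p List.mem_cons_self
    rw [Vm.bas_cons hl' hl]
    refine Vm.toVirRep.L_L_mem ?_ ?_ (fun h => by omega)
    · exact Vm.levelSpan_le (by simp [VirIdx.level]; ring) le_rfl (Vm.L_neg_mem hp (ih hl'))
    · have := Vm.L_neg_bas_mem ((⟨l, hl'⟩, q) : VirIdx) (a := 1 + p) (by omega)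
      push_cast at this
      rw [show -1 + -(p : ℤ) = -(1 + p) by ring]
      exact Vm.levelSpan_le (by simp [VirIdx.level]; ring) (by simp) this

lemma L_neg_one_mem {ℓ : ℤ} {Q : ℕ} {x : M} (hx : x ∈ Vm.levelSpan ℓ Q) :
    Vm.L (-1) x ∈ Vm.levelSpan (ℓ + 1) (Q + 1) :=
  Vm.L_mem_of_mem_span_bas (fun j hj =>
    Vm.levelSpan_le (by rw [hj.1]) (Nat.add_le_add_right hj.2 1) (Vm.L_neg_one_bas_mem j)) hx

lemma L_hw_mem (m : ℤ) : Vm.L m Vm.hw ∈ Vm.levelSpan (-m) 1 := by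
  have hhw : Vm.bas (VirIdx.pure 0) = Vm.hw := Vm.bas_eq _
  rcases lt_trichotomy m 0 with hm | rfl | hm
  · obtain ⟨a, rfl⟩ : ∃ a : ℕ, m = -a := ⟨(-m).toNat, by omega⟩
    rw [← hhw]
    rcases eq_or_lt_of_le (show 1 ≤ a by omega) with rfl | ha
    · rw [Nat.cast_one]
      exact Vm.levelSpan_le (by simp [VirIdx.pure, VirIdx.level]) le_rfl
        (Vm.L_neg_one_bas_mem (VirIdx.pure 0))
    · exact Vm.levelSpan_le (by simp [VirIdx.pure, VirIdx.level]) (by simp [VirIdx.pure])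
        (Vm.L_neg_bas_mem (VirIdx.pure 0) ha)
  · rw [Vm.hw_L0, ← hhw]
    exact Submodule.smul_mem _ _
      (Vm.bas_mem_levelSpan (by simp [VirIdx.pure, VirIdx.level]) (by simp [VirIdx.pure]))
  · rw [Vm.hw_sing m hm]
    exact Submodule.zero_mem _

lemma L_bas_mem (i : VirIdx) (m : ℤ) :
    Vm.L m (Vm.bas i) ∈ Vm.levelSpan (i.level - m) (i.2 + 1) := by
  obtain ⟨⟨l, hl⟩, q⟩ := i
  induction l generalizing m with
  | nil =>
    induction q generalizing m with
    | zero =>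
      rw [Vm.bas_nil_zero]
      exact Vm.levelSpan_le (by simp [VirIdx.level]) le_rfl (Vm.L_hw_mem m)
    | succ q ih =>
      rw [Vm.bas_nil_succ hl]
      refine Vm.toVirRep.L_L_mem ?_ ?_ (fun hm => ?_)
      · exact Vm.levelSpan_le (by simp [VirIdx.level]; ring) le_rfl (Vm.L_neg_one_mem (ih m))
      · exact Vm.levelSpan_le (by simp [VirIdx.level]; ring) (by simp) (ih (m + -1))
      · exact Vm.bas_mem_levelSpan (by simp [VirIdx.level]; omega) (by omega)
  | cons p l ih =>
    have hl' := VirIdx.isChain_and_two_le_of_cons hl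
    have hp : 2 ≤ p := hl.2 p List.mem_cons_self
    rw [Vm.bas_cons hl' hl]
    refine Vm.toVirRep.L_L_mem ?_ ?_ (fun hm => ?_)
    · exact Vm.levelSpan_le (by simp [VirIdx.level]; ring) le_rfl (Vm.L_neg_mem hp (ih m hl'))
    · exact Vm.levelSpan_le (by simp [VirIdx.level]; ring) le_rfl (ih (m + -p) hl')
    · exact Vm.bas_mem_levelSpan (by simp [VirIdx.level]; omega) (by simp)

lemma L_bas_eq_zero {i : VirIdx} {m : ℤ} (hm : (i.level : ℤ) < m) : Vm.L m (Vm.bas i) = 0 := by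
  simpa [Vm.levelSpan_eq_bot (sub_neg.2 hm)] using Vm.L_bas_mem i m

lemma eventually_L_eq_zero (x : M) : ∀ᶠ m in Filter.atTop, Vm.L m x = 0 := by
  refine Filter.eventually_atTop.2 ⟨(Vm.bas.repr x).support.sup VirIdx.level + 1, fun m hm => ?_⟩
  have : Vm.L m x ∈ (⊥ : Submodule ℂ M) := by
    refine Vm.L_mem_of_mem_span_bas (fun j hj => ?_) (Vm.bas.mem_span_repr_support x)
    have := Finset.le_sup (f := VirIdx.level) hj
    rw [Vm.L_bas_eq_zero (by omega)]
    exact Submodule.zero_mem _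
  simpa using this

def indexLT (n : ℕ) : Submodule ℂ M :=
  Submodule.span ℂ (Vm.bas '' {i | i.2 < n})

lemma levelSpan_le_indexLT {ℓ : ℤ} {Q n : ℕ} (hQ : Q < n) : Vm.levelSpan ℓ Q ≤ Vm.indexLT n :=
  Submodule.span_mono (Set.image_mono fun _ hj => lt_of_le_of_lt hj.2 hQ)

lemma L_mem_indexLT_succ (m : ℤ) {n : ℕ} {x : M} (hx : x ∈ Vm.indexLT n) :
    Vm.L m x ∈ Vm.indexLT (n + 1) :=
  Vm.L_mem_of_mem_span_bas (fun j hj =>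
    Vm.levelSpan_le_indexLT (Nat.add_lt_add_right hj 1) (Vm.L_bas_mem j m)) hx

lemma L_mem_indexLT_of_le_neg_two {m : ℤ} (hm : m ≤ -2) {n : ℕ} {x : M}
    (hx : x ∈ Vm.indexLT n) : Vm.L m x ∈ Vm.indexLT n := by
  obtain ⟨a, rfl⟩ : ∃ a : ℕ, m = -a := ⟨(-m).toNat, by omega⟩
  exact Vm.L_mem_of_mem_span_bas (fun j hj =>
    Vm.levelSpan_le_indexLT hj (Vm.L_neg_bas_mem j (by omega))) hx

lemma mem_indexLT_iff_Ind_lt {n : ℕ} {x : M} : x ∈ Vm.indexLT n ↔ Vm.Ind x < n := by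
  rw [indexLT, Vm.bas.mem_span_image, VirVerma.Ind,
    WithBot.unbotD_lt_iff fun _ => by omega, Finset.max,
    Finset.sup_lt_iff (WithBot.bot_lt_coe _)]
  simp [Set.subset_def]

lemma neg_one_le_Ind (x : M) : -1 ≤ Vm.Ind x := by
  rw [VirVerma.Ind]
  cases hmax : ((Vm.bas.repr x).support.image fun i : VirIdx => (i.2 : ℤ)).max with
  | bot => rfl
  | coe k =>
    obtain ⟨i, -, rfl⟩ := Finset.mem_image.1 (Finset.mem_of_max hmax)
    simp only [WithBot.unbotD_coe]
    omega

lemma Ind_le_add_of_forall_mem_indexLT {x y : M} (d : ℕ)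
    (h : ∀ n : ℕ, x ∈ Vm.indexLT n → y ∈ Vm.indexLT (n + d)) : Vm.Ind y ≤ Vm.Ind x + d := by
  obtain ⟨n, hn⟩ : ∃ n : ℕ, (n : ℤ) = Vm.Ind x + 1 :=
    ⟨_, Int.toNat_of_nonneg (by linarith [Vm.neg_one_le_Ind x])⟩
  have := Vm.mem_indexLT_iff_Ind_lt.1 (h n (Vm.mem_indexLT_iff_Ind_lt.2 (by omega)))
  push_cast at this
  omega

lemma Ind_L_le (m : ℤ) (x : M) : Vm.Ind (Vm.L m x) ≤ Vm.Ind x + 1 :=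
  Vm.Ind_le_add_of_forall_mem_indexLT 1 fun _ => Vm.L_mem_indexLT_succ m

lemma Ind_L_le_of_le_neg_two {m : ℤ} (hm : m ≤ -2) (x : M) : Vm.Ind (Vm.L m x) ≤ Vm.Ind x := by
  simpa using Vm.Ind_le_add_of_forall_mem_indexLT 0 fun _ => Vm.L_mem_indexLT_of_le_neg_two hm

end VirVerma

theorem projection_of_omega_action_is_laurent_polynomial_general
    {M : Type} [AddCommGroup M] [Module ℂ M] (c h : ℂ) (Vm : VirVerma M c h)
    (N : ℕ)
    (W2 : Submodule ℂ M)
    (W1 : Submodule ℂ M)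
    (hW1 : W1 = Submodule.span ℂ {x : M | ∃ i : VirIdx, i.2 < N ∧ x = Vm.bas i})
    (hcompl : IsCompl W2 W1) :
    ∀ w1 ∈ W1,
      {m : ℤ |
        (W2.subtype ∘ₗ Submodule.linearProjOfIsCompl W2 W1 hcompl) (Vm.L m w1) ≠ 0}.Finite ∧
      ((∃ m : ℤ,
          (W2.subtype ∘ₗ Submodule.linearProjOfIsCompl W2 W1 hcompl) (Vm.L m w1) ≠ 0) →
        Vm.Ind w1 = (N : ℤ) - 1) := by
  intro w1 hw1
  have hW1' : W1 = Vm.indexLT N := by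
    rw [hW1, VirVerma.indexLT]
    congr 1
    ext
    simp [eq_comm]
  have hmemW1 : ∀ x, x ∈ W1 ↔ Vm.Ind x < N := fun x => hW1' ▸ Vm.mem_indexLT_iff_Ind_lt
  have hπ : ∀ x, Vm.Ind x < N →
      (W2.subtype ∘ₗ Submodule.linearProjOfIsCompl W2 W1 hcompl) x = 0 := fun x hx =>
    (congrArg W2.subtype
      (Submodule.projectionOnto_apply_of_mem_right hcompl ((hmemW1 x).2 hx))).trans (map_zero _)
  obtain ⟨K, hK⟩ := Filter.eventually_atTop.1 (Vm.eventually_L_eq_zero w1)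
  refine ⟨(Set.finite_Icc (-1) K).subset fun m hm => ⟨?_, ?_⟩, fun ⟨m, hm⟩ => ?_⟩
  · by_contra hlt
    exact hm (hπ _ ((Vm.Ind_L_le_of_le_neg_two (by omega) w1).trans_lt ((hmemW1 w1).1 hw1)))
  · by_contra hlt
    exact hm (by rw [hK m (by omega), map_zero])
  · have hge : (N : ℤ) ≤ Vm.Ind (Vm.L m w1) := not_lt.1 (mt (hπ _) hm)
    have := Vm.Ind_L_le m w1
    have := (hmemW1 w1).1 hw1
    omega

/-- Proposition 5.10 of the paper.
With the setup of a Verma module `W = M(c,h)` in a Feigin–Fuchs block of type (a),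
(b) or (c), `W₂ = M(c,h₁)` the submodule generated by a singular vector of level `N`,
`W₁` the complementary subspace and `π_{W₂}` the projection along `W₁`: for
`w₁ ∈ W₁`, writing `Y_W(ω,x)w₁ = ∑ₘ L(m) w₁ x^{-m-2}`, the series `π_{W₂}Y_W(ω,x)w₁`
is a finite Laurent polynomial in `W₂[x,x⁻¹]`, and it is nonzero only when
`Ind(w₁) = N - 1`. -/
theorem projection_of_omega_action_is_laurent_polynomial
    {M : Type} [AddCommGroup M] [Module ℂ M] (c h : ℂ) (Vm : VirVerma M c h)
    (hblock : ∀ U : Submodule ℂ M, VirInvariant Vm.toVirRep U → U ≠ ⊥ → U ≠ ⊤ →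
      ∃ t : M, IsSingular Vm.toVirRep t ∧ U = VirGen Vm.toVirRep {t})
    (N : ℕ) (hN : 1 ≤ N) (s : M)
    (hsing : IsSingular Vm.toVirRep s)
    (hlev : ∀ i ∈ (Vm.bas.repr s).support, VirIdx.level i = N)
    (hnorm : Vm.bas.repr s (VirIdx.pure N) = 1)
    (W2 : Submodule ℂ M) (hW2 : W2 = VirGen Vm.toVirRep {s})
    (W1 : Submodule ℂ M)
    (hW1 : W1 = Submodule.span ℂ {x : M | ∃ i : VirIdx, i.2 < N ∧ x = Vm.bas i})
    (hcompl : IsCompl W2 W1) :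
    ∀ w1 ∈ W1,
      {m : ℤ |
        (W2.subtype ∘ₗ Submodule.linearProjOfIsCompl W2 W1 hcompl) (Vm.L m w1) ≠ 0}.Finite ∧
      ((∃ m : ℤ,
          (W2.subtype ∘ₗ Submodule.linearProjOfIsCompl W2 W1 hcompl) (Vm.L m w1) ≠ 0) →
        Vm.Ind w1 = (N : ℤ) - 1) :=
  projection_of_omega_action_is_laurent_polynomial_general c h Vm N W2 W1 hW1 hcompl
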